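/- Fix x₀ ∈ ℂⁿ and let (f_n) be holomorphic maps f_n : 𝔻 → ℂⁿ with f_n(0) = x₀ and area(f_n) finite. Assume τ(f_n) → ∞ and area(f_n) = o(τ(f_n)). Then for every bounded subset V₀ ⊆ ℂⁿ and every r ∈ (0,1), there exists N such that for all n ≥ N the image f_n(𝔻_r) is not contained in V₀. (This is the escape lemma in the proof of the paper's Proposition on non-Kobayashi-hyperbolicity, in the case of the standard Stein structure ψ(z) = ‖z‖²/4 on ℂⁿ.) -/

import Mathlib

open MeasureTheory Filter Metric Set

/-!
If `f` maps `𝔻_r` into a bounded set `V`, the Cauchy estimates bound `‖f'‖` on `𝔻_{r/2}` by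
`diam V / (r/2)`, while `ln (1/|z|) ≤ ln (2/r)` off `𝔻_{r/2}`. Hence
`τ(f) ≤ (diam V / (r/2))² ∫_𝔻 ln (1/|z|) dA + ln (2/r) area(f)`, where the first term does not
depend on `f` (the weight `ln (1/|z|)` is integrable on `𝔻`). This is incompatible with
`τ(f_n) → ∞` and `area(f_n) = o(τ(f_n))`.
-/

noncomputable def diskArea {E : Type*} [NormedAddCommGroup E] [NormedSpace ℂ E] (f : ℂ → E) :
    ℝ :=
  ∫ z in ball (0 : ℂ) 1, ‖deriv f z‖ ^ 2

noncomputable def nevanlinnaTau {E : Type*} [NormedAddCommGroup E] [NormedSpace ℂ E]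
    (f : ℂ → E) : ℝ :=
  ∫ z in ball (0 : ℂ) 1, ‖deriv f z‖ ^ 2 * Real.log (1 / ‖z‖)

section LogWeight

variable {E : Type*} [NormedAddCommGroup E]

theorem log_one_div_norm_nonneg {x : E} (hx : x ∈ ball (0 : E) 1) :
    0 ≤ Real.log (1 / ‖x‖) := by
  rw [one_div, Real.log_inv, neg_nonneg]
  exact Real.log_nonpos (norm_nonneg x) (mem_ball_zero_iff.1 hx).le

variable [NormedSpace ℝ E] [FiniteDimensional ℝ E] [MeasurableSpace E] [BorelSpace E]

theorem integrableOn_log_one_div_norm_ball (μ : Measure E) [μ.IsAddHaarMeasure]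
    (hd : 1 ≤ Module.finrank ℝ E) :
    IntegrableOn (fun x => Real.log (1 / ‖x‖)) (ball 0 1) μ := by
  refine integrableOn_ball_of_norm_le_rpow hd (C := 2) (α := 1 / 2)
    (by linarith [(Nat.one_le_cast.2 hd : (1 : ℝ) ≤ Module.finrank ℝ E)]) ?_
    (Real.measurable_log.comp (measurable_norm.const_div 1)).aestronglyMeasurable
  filter_upwards [ae_restrict_mem measurableSet_ball] with x hx
  rw [Real.norm_of_nonneg (log_one_div_norm_nonneg hx)]
  calc Real.log (1 / ‖x‖) ≤ (1 / ‖x‖) ^ (1 / 2 : ℝ) / (1 / 2) :=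
        Real.log_le_rpow_div (by positivity) (by norm_num)
    _ = 2 * ‖x‖ ^ (-(1 / 2) : ℝ) := by
        rw [Real.rpow_neg (norm_nonneg x), one_div ‖x‖, Real.inv_rpow (norm_nonneg x)]
        ring

theorem setIntegral_mul_log_one_div_norm_le (μ : Measure E) [μ.IsAddHaarMeasure]
    (hd : 1 ≤ Module.finrank ℝ E) {g : E → ℝ} {K s : ℝ} (hs : 0 < s) (hs1 : s ≤ 1)
    (hg : ∀ x, 0 ≤ g x) (hgi : IntegrableOn g (ball 0 1) μ) (hK : ∀ x ∈ ball (0 : E) s, g x ≤ K) :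
    ∫ x in ball (0 : E) 1, g x * Real.log (1 / ‖x‖) ∂μ ≤
      K * ∫ x in ball (0 : E) 1, Real.log (1 / ‖x‖) ∂μ +
        Real.log (1 / s) * ∫ x in ball (0 : E) 1, g x ∂μ := by
  have hK0 : 0 ≤ K := (hg 0).trans (hK 0 (mem_ball_self hs))
  have hlog_s : 0 ≤ Real.log (1 / s) := Real.log_nonneg (one_le_one_div hs hs1)
  have hLi := integrableOn_log_one_div_norm_ball μ hd
  have hpointwise : ∀ x ∈ ball (0 : E) 1,
      g x * Real.log (1 / ‖x‖) ≤ K * Real.log (1 / ‖x‖) + Real.log (1 / s) * g x := by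
    intro x hx
    have hL := log_one_div_norm_nonneg hx
    rcases lt_or_ge ‖x‖ s with hxs | hxs
    · have hgL := mul_le_mul_of_nonneg_right (hK x (mem_ball_zero_iff.2 hxs)) hL
      linarith [mul_nonneg hlog_s (hg x)]
    · have hLs : Real.log (1 / ‖x‖) ≤ Real.log (1 / s) :=
        Real.log_le_log (one_div_pos.2 (hs.trans_le hxs)) (one_div_le_one_div_of_le hs hxs)
      linarith [mul_le_mul_of_nonneg_left hLs (hg x), mul_nonneg hK0 hL]
  calc ∫ x in ball (0 : E) 1, g x * Real.log (1 / ‖x‖) ∂μ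
      ≤ ∫ x in ball (0 : E) 1, K * Real.log (1 / ‖x‖) + Real.log (1 / s) * g x ∂μ := by
        refine integral_mono_of_nonneg ?_ ((hLi.const_mul K).add (hgi.const_mul _)) ?_
        · filter_upwards [ae_restrict_mem measurableSet_ball] with x hx
          exact mul_nonneg (hg x) (log_one_div_norm_nonneg hx)
        · filter_upwards [ae_restrict_mem measurableSet_ball] with x hx
          exact hpointwise x hx
    _ = K * ∫ x in ball (0 : E) 1, Real.log (1 / ‖x‖) ∂μ +
          Real.log (1 / s) * ∫ x in ball (0 : E) 1, g x ∂μ := by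
        rw [integral_add (hLi.const_mul K) (hgi.const_mul _), integral_const_mul,
          integral_const_mul]

end LogWeight

section Holomorphic

variable {E : Type*} [NormedAddCommGroup E] [NormedSpace ℂ E]

theorem Complex.norm_deriv_le_diam_div_of_mapsTo_ball {f : ℂ → E} {c : ℂ} {ρ : ℝ} {V : Set E}
    (hV : Bornology.IsBounded V) (hf : DifferentiableOn ℂ f (ball c ρ))
    (hmaps : MapsTo f (ball c ρ) V) (hρ : 0 < ρ) :
    ‖deriv f c‖ ≤ diam V / ρ :=
  Complex.norm_deriv_le_div_of_mapsTo_ball hf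
    (fun _ hw => mem_closedBall.2 (dist_le_diam_of_mem hV (hmaps hw) (hmaps (mem_ball_self hρ))))
    hρ

theorem nevanlinnaTau_le_of_mapsTo_ball {f : ℂ → E} {V : Set E} {r : ℝ}
    (hV : Bornology.IsBounded V) (hr0 : 0 < r) (hr2 : r ≤ 2)
    (hf : DifferentiableOn ℂ f (ball 0 r))
    (harea : IntegrableOn (fun z => ‖deriv f z‖ ^ 2) (ball (0 : ℂ) 1))
    (hmaps : MapsTo f (ball 0 r) V) :
    nevanlinnaTau f ≤ (diam V / (r / 2)) ^ 2 * (∫ z in ball (0 : ℂ) 1, Real.log (1 / ‖z‖)) +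
      Real.log (1 / (r / 2)) * diskArea f := by
  have hderiv : ∀ z ∈ ball (0 : ℂ) (r / 2), ‖deriv f z‖ ^ 2 ≤ (diam V / (r / 2)) ^ 2 := by
    intro z hz
    have hsub : ball z (r / 2) ⊆ ball 0 r := by
      refine ball_subset_ball' ?_
      linarith [mem_ball.1 hz]
    gcongr
    exact Complex.norm_deriv_le_diam_div_of_mapsTo_ball hV (hf.mono hsub) (hmaps.mono_left hsub)
      (by positivity)
  exact setIntegral_mul_log_one_div_norm_le volume (by simp) (by positivity) (by linarith)
    (fun z => by positivity) harea hderiv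

end Holomorphic

theorem eventually_const_add_mul_lt {α : Type*} {l : Filter α} {T A : α → ℝ}
    (hT : Tendsto T l atTop) (hA : Tendsto (fun n => A n / T n) l (nhds 0)) (C c : ℝ) :
    ∀ᶠ n in l, C + c * A n < T n := by
  have hsmall : Tendsto (fun n => C / T n + c * (A n / T n)) l (nhds 0) := by
    simpa using (tendsto_const_nhds.div_atTop hT).add (hA.const_mul c)
  filter_upwards [hT.eventually_gt_atTop 0, hsmall.eventually_lt_const zero_lt_one] with n hpos h
  rw [mul_div_assoc', ← add_div, div_lt_one hpos] at h
  exact h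

theorem image_eventually_not_subset_bounded_of_area_littleO_tau_general
    (m : ℕ) (f : ℕ → ℂ → EuclideanSpace ℂ (Fin m))
    (hf : ∀ n, DifferentiableOn ℂ (f n) (Metric.ball (0 : ℂ) 1))
    (harea : ∀ n, IntegrableOn (fun z => ‖deriv (f n) z‖ ^ 2) (Metric.ball (0 : ℂ) 1))
    (htau : Tendsto
      (fun n => ∫ z in Metric.ball (0 : ℂ) 1,
        ‖deriv (f n) z‖ ^ 2 * Real.log (1 / ‖z‖)) atTop atTop)
    (hlittle : Tendsto
      (fun n => (∫ z in Metric.ball (0 : ℂ) 1, ‖deriv (f n) z‖ ^ 2) /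
        ∫ z in Metric.ball (0 : ℂ) 1,
          ‖deriv (f n) z‖ ^ 2 * Real.log (1 / ‖z‖))
      atTop (nhds 0)) :
    ∀ V₀ : Set (EuclideanSpace ℂ (Fin m)), Bornology.IsBounded V₀ →
      ∀ r ∈ Set.Ioo (0 : ℝ) 1, ∃ N : ℕ, ∀ n ≥ N,
        ¬ (f n '' Metric.ball (0 : ℂ) r ⊆ V₀) := by
  intro V₀ hV₀ r ⟨hr0, hr1⟩
  obtain ⟨N, hN⟩ := (eventually_const_add_mul_lt htau hlittle
    ((diam V₀ / (r / 2)) ^ 2 * ∫ z in ball (0 : ℂ) 1, Real.log (1 / ‖z‖))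
    (Real.log (1 / (r / 2)))).exists_forall_of_atTop
  refine ⟨N, fun n hn himage => (hN n hn).not_ge ?_⟩
  exact nevanlinnaTau_le_of_mapsTo_ball hV₀ hr0 (by linarith)
    ((hf n).mono (ball_subset_ball hr1.le)) (harea n) (image_subset_iff.1 himage)

/-- **escape lemma.** Fix `x₀ ∈ ℂⁿ` and let `f_n : 𝔻 → ℂⁿ` be holomorphic
with `f_n(0) = x₀` and finite area. If `τ(f_n) → ∞` and `area(f_n) = o(τ(f_n))`, then
for every bounded `V₀ ⊆ ℂⁿ` and every `r ∈ (0,1)`, eventually `f_n(𝔻_r) ⊄ V₀`. -/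
theorem image_eventually_not_subset_bounded_of_area_littleO_tau
    (m : ℕ) (x₀ : EuclideanSpace ℂ (Fin m)) (f : ℕ → ℂ → EuclideanSpace ℂ (Fin m))
    (hf : ∀ n, DifferentiableOn ℂ (f n) (Metric.ball (0 : ℂ) 1))
    (h0 : ∀ n, f n 0 = x₀)
    (harea : ∀ n, IntegrableOn (fun z => ‖deriv (f n) z‖ ^ 2) (Metric.ball (0 : ℂ) 1))
    (htau : Tendsto
      (fun n => ∫ z in Metric.ball (0 : ℂ) 1,
        ‖deriv (f n) z‖ ^ 2 * Real.log (1 / ‖z‖)) atTop atTop)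
    (hlittle : Tendsto
      (fun n => (∫ z in Metric.ball (0 : ℂ) 1, ‖deriv (f n) z‖ ^ 2) /
        ∫ z in Metric.ball (0 : ℂ) 1,
          ‖deriv (f n) z‖ ^ 2 * Real.log (1 / ‖z‖))
      atTop (nhds 0)) :
    ∀ V₀ : Set (EuclideanSpace ℂ (Fin m)), Bornology.IsBounded V₀ →
      ∀ r ∈ Set.Ioo (0 : ℝ) 1, ∃ N : ℕ, ∀ n ≥ N,
        ¬ (f n '' Metric.ball (0 : ℂ) r ⊆ V₀) :=
  image_eventually_not_subset_bounded_of_area_littleO_tau_general m f hf harea htau hlittle
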